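/- arXiv:1907.06281 — 4 statements merged into one kernel-verified Lean document; each statement's English description precedes it below -/
import Mathlib

section
/- Let n, m be positive integers with gcd(n, m) = d. Perform the Euclidean algorithm: m = h₀·n + r₁, n = h₁·r₁ + r₂, …, r_{k−1} = h_k·r_k with r_k = d and 1 ≤ r_j < r_{j−1}. Then the sum of squares of the multiplicity sequence h₀·n² + h₁·r₁² + ⋯ + h_k·r_k² equals n·m. -/
/-- Enriques–Chisini arithmetic: if the Euclidean algorithm on `(n, m)` has
quotients `h₀, …, h_k` and remainders `r₁ > r₂ > ⋯ > r_k = gcd(n,m) = dd`, then the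
sum of squares of the multiplicity sequence equals `n·m`. -/
theorem stmt_3 (n m dd k : ℕ) (h r : ℕ → ℕ)
    (hn : 0 < n) (hm : n ≤ m) (hdd : Nat.gcd n m = dd)
    (hr0 : r 0 = n) (hrk : r k = dd) (hrk1 : r (k + 1) = 0)
    (hstep0 : m = h 0 * n + r 1)
    (hstep : ∀ j, 1 ≤ j → j ≤ k → r (j - 1) = h j * r j + r (j + 1))
    (hdec : ∀ j, 1 ≤ j → j ≤ k → 1 ≤ r j ∧ r j < r (j - 1)) :
    h 0 * n ^ 2 + ∑ j ∈ Finset.Icc 1 k, h j * (r j) ^ 2 = n * m := by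
  have key : ∀ K, K ≤ k →
      (∑ j ∈ Finset.Icc 1 K, h j * (r j) ^ 2) + r K * r (K + 1) = r 0 * r 1 := by
    intro K
    induction K with
    | zero => intro _; simp
    | succ K ih =>
      intro hK
      rw [Finset.sum_Icc_succ_top (by omega)]
      have hs := hstep (K + 1) (by omega) hK
      simp only [Nat.add_sub_cancel] at hs
      have := ih (by omega)
      nlinarith [this, hs]
  have hk' := key k le_rfl
  rw [hrk1, hr0, Nat.mul_zero, Nat.add_zero] at hk'
  rw [hk', hstep0]
  ring
end

section
/- Let n < m be coprime positive integers and consider the continued fraction expansion m/n = h₀ + 1/(h₁ + 1/(⋯ + 1/h_k)) with h₀ ≥ 1, h_j ≥ 1 for 1 ≤ j ≤ k−1, h_k ≥ 2 (or k = 0), so that m = h₀ n + r₁, n = h₁ r₁ + r₂, …, r_{k−1} = h_k r_k with r_k = 1. Then the multiplicity sequence (n repeated h₀ times, r₁ repeated h₁ times, …, r_k = 1 repeated h_k times) satisfies: the sum of squares of its entries is n·m, and the number of its entries is h₀ + h₁ + ⋯ + h_k. -/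
lemma stmt13_sum_aux (N : ℕ) (g : ℕ → List ℕ) (f : ℕ → ℕ) :
    (((List.range N).flatMap g).map f).sum = ∑ j ∈ Finset.range N, ((g j).map f).sum := by
  induction N with
  | zero => simp
  | succ n ih => simp [List.range_succ, Finset.sum_range_succ, ih]

lemma stmt13_len_aux (N : ℕ) (g : ℕ → List ℕ) :
    ((List.range N).flatMap g).length = ∑ j ∈ Finset.range N, (g j).length := by
  induction N with
  | zero => simp
  | succ n ih => simp [List.range_succ, Finset.sum_range_succ, ih]

/-- Enriques–Chisini data for `y^n = x^m`, `gcd(n,m) = 1`: if `h₀, …, h_k` are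
the continued fraction quotients of `m/n` (with remainders `r₀ = n > r₁ > ⋯ >
r_k = 1`), then the multiplicity sequence (`n` repeated `h₀` times, `r₁`
repeated `h₁` times, …, `1` repeated `h_k` times) has `h₀ + ⋯ + h_k` entries
and its squares sum to `n·m`. -/
theorem stmt_13 (n m k : ℕ) (h r : ℕ → ℕ)
    (hn : 0 < n) (hnm : n < m) (hcop : Nat.Coprime n m)
    (hr0 : r 0 = n) (hrk : r k = 1) (hrk1 : r (k + 1) = 0)
    (hstep0 : m = h 0 * n + r 1)
    (hstep : ∀ j, 1 ≤ j → j ≤ k → r (j - 1) = h j * r j + r (j + 1))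
    (hdec : ∀ j, 1 ≤ j → j ≤ k → 1 ≤ r j ∧ r j < r (j - 1))
    (hh0 : 1 ≤ h 0) (hh : ∀ j, 1 ≤ j → j ≤ k → 1 ≤ h j)
    (hhk : k = 0 ∨ 2 ≤ h k) :
    (((List.range (k + 1)).flatMap fun j => List.replicate (h j) (r j)).map
        fun a => a ^ 2).sum = n * m ∧
    ((List.range (k + 1)).flatMap fun j => List.replicate (h j) (r j)).length
      = ∑ j ∈ Finset.range (k + 1), h j := by
  constructor
  · rw [stmt13_sum_aux]
    have hsimp : ∀ j, ((List.replicate (h j) (r j)).map fun a => a ^ 2).sum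
        = h j * r j ^ 2 := by
      intro j; simp [List.map_replicate, List.sum_replicate, mul_comm]
    simp only [hsimp]
    -- telescoping: ∑_{j ∈ Ico (k+1-d) (k+1)} h j * r j ^ 2 = r (k-d) * r (k+1-d)
    have key : ∀ d, d ≤ k →
        ∑ j ∈ Finset.Ico (k + 1 - d) (k + 1), h j * r j ^ 2
          = r (k - d) * r (k + 1 - d) := by
      intro d
      induction d with
      | zero => intro _; simp [hrk1]
      | succ d ih =>
        intro hdk
        have hd : d ≤ k := Nat.le_of_succ_le hdk
        have ht1 : 1 ≤ k - d := by omega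
        have h1 : k + 1 - (d + 1) = k - d := by omega
        have h2 : k + 1 - d = (k - d) + 1 := by omega
        rw [h1]
        rw [Finset.sum_eq_sum_Ico_succ_bot (by omega : k - d < k + 1)]
        rw [← h2, ih hd, h2]
        have hs := hstep (k - d) ht1 (by omega)
        have h3 : k - d - 1 = k - (d + 1) := by omega
        rw [h3] at hs
        have : r (k - (d + 1)) * r (k - d)
            = h (k - d) * r (k - d) ^ 2 + r (k - d) * r (k - d + 1) := by
          rw [hs]; ring
        omega
    have hmain := key k le_rfl
    have e1 : k + 1 - k = 1 := by omega
    have e2 : k - k = 0 := by omega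
    rw [e1, e2] at hmain
    rw [Finset.range_eq_Ico, Finset.sum_eq_sum_Ico_succ_bot (by omega : 0 < k + 1),
      hmain, hr0, hstep0]
    ring
  · rw [stmt13_len_aux]
    simp
end

section
/- For the curve germ Z = {y⁶ − 6x²y⁵ + 9x⁴y⁴ − 2x⁵y³ + 6x⁷y² + x¹⁰ − 9x¹¹ = 0}: the polynomial F₁ = y³ − x⁵ − 3x²y² has a y-root that is a Puiseux series S₁ in x with initial terms x^{5/3} + x² + higher order terms, and F₁ is irreducible in ℂ[[x]][y]. -/
/-!
Write `x = t³` and look for the root as `y = t⁵ u`: then `F₁(t³, t⁵u) = t¹⁵ (u³ - 3t u² - 1)`, and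
the cubic `u³ - 3t u² - 1` has the simple root `u ≡ 1 (mod t)` (its derivative there is `3`), so
Hensel's lemma lifts it to `ℂ⟦t⟧`; the coefficient of `t` in the equation then gives `u = 1 + t + ⋯`.

`F₁` is a monic cubic over the domain `ℂ⟦x⟧`, so it is irreducible once it has no root there. A root
`r` would satisfy `r² (r - 3x²) = x⁵`, i.e. `2 ord r + ord (r - 3x²) = 5`; but the two orders agree
when `ord r < 2`, and are both `≥ 2` otherwise.
-/

namespace PowerSeries

variable {K : Type*}

theorem exists_pow_three_sub_three_X_mul_sq_eq_one [CommRing K] (h3 : IsUnit (3 : K)) :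
    ∃ a : K⟦X⟧, a ^ 3 - 3 * X * a ^ 2 = 1 ∧ X ∣ a - 1 := by
  let q : Polynomial K⟦X⟧ := .X ^ 3 - .C (3 * X) * .X ^ 2 - 1
  have hq : q.Monic := by unfold q; monicity!
  have hq_eval : q.eval 1 = -(3 * X) := by simp [q]
  obtain ⟨a, ha, haX⟩ := HenselianRing.is_henselian (I := Ideal.span {X}) q hq 1
    (by rw [hq_eval, Ideal.mem_span_singleton]; exact (dvd_mul_left _ _).neg_right)
    (by
      refine IsUnit.map _ (isUnit_iff_constantCoeff.mpr ?_)
      norm_num [q]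
      exact h3)
  refine ⟨a, ?_, Ideal.mem_span_singleton.mp haX⟩
  simp only [q, Polynomial.IsRoot, Polynomial.eval_sub, Polynomial.eval_pow, Polynomial.eval_mul,
    Polynomial.eval_X, Polynomial.eval_C, Polynomial.eval_one] at ha
  linear_combination ha

theorem coeff_one_eq_one_of_pow_three_sub_three_X_mul_sq_eq_one [CommRing K] (h3 : IsUnit (3 : K))
    {a : K⟦X⟧} (ha : a ^ 3 - 3 * X * a ^ 2 = 1) (hX : X ∣ a - 1) : coeff 1 a = 1 := by
  obtain ⟨b, hb⟩ := hX
  obtain rfl : a = 1 + X * b := by linear_combination hb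
  have key : X * (3 * b - 3 + X * (3 * b ^ 2 - 6 * b + X * (b ^ 3 - 3 * b ^ 2))) = 0 := by
    linear_combination ha
  have h := congrArg (coeff 1) key
  simp only [coeff_succ_X_mul, coeff_zero_eq_constantCoeff, map_add, map_sub, map_mul,
    map_ofNat, constantCoeff_X, zero_mul, add_zero, map_zero] at h
  rw [← mul_sub_one, h3.mul_right_eq_zero, sub_eq_zero] at h
  simpa [coeff_succ_X_mul] using h

theorem sq_mul_sub_X_sq_mul_ne_X_pow_five [CommRing K] [IsDomain K] (r s : K⟦X⟧) :
    r ^ 2 * (r - X ^ 2 * s) ≠ X ^ 5 := by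
  intro h
  have hsum : 2 * r.order + (r - X ^ 2 * s).order = 5 := by
    simpa [order_mul, order_pow, order_X_pow] using congrArg order h
  have hX2s : 2 ≤ (X ^ 2 * s : K⟦X⟧).order := by rw [order_mul, order_X_pow]; exact le_self_add
  have hd : min r.order 2 ≤ (r - X ^ 2 * s).order := by
    have := min_order_le_order_add r (-(X ^ 2 * s))
    rw [order_neg, ← sub_eq_add_neg] at this
    exact (min_le_min_left _ hX2s).trans this
  have hr : min (r - X ^ 2 * s).order 2 ≤ r.order := by
    have := min_order_le_order_add (r - X ^ 2 * s) (X ^ 2 * s)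
    rw [sub_add_cancel] at this
    exact (min_le_min_left _ hX2s).trans this
  generalize r.order = n at *
  generalize (r - X ^ 2 * s).order = m at *
  induction n using ENat.recTopCoe with
  | top => simp at hsum
  | coe n =>
    induction m using ENat.recTopCoe with
    | top => simp at hsum
    | coe m =>
      rw [min_le_iff] at hd hr
      norm_cast at hd hr hsum
      omega

theorem irreducible_X_pow_three_sub_C_X_pow_five_sub [CommRing K] [IsDomain K] (c : K⟦X⟧) :
    Irreducible (Polynomial.X ^ 3 - Polynomial.C (X ^ 5)
      - Polynomial.C c * Polynomial.C (X ^ 2) * Polynomial.X ^ 2 : Polynomial K⟦X⟧) := by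
  set p : Polynomial K⟦X⟧ := Polynomial.X ^ 3 - Polynomial.C (X ^ 5)
    - Polynomial.C c * Polynomial.C (X ^ 2) * Polynomial.X ^ 2
  have hp : p.Monic := by unfold p; monicity!
  have hdeg : p.natDegree = 3 := by unfold p; compute_degree!
  rw [hp.irreducible_iff_roots_eq_zero_of_degree_le_three (by omega) (by omega),
    Multiset.eq_zero_iff_forall_notMem]
  intro r hr
  rw [Polynomial.mem_roots hp.ne_zero, Polynomial.IsRoot.def] at hr
  simp only [p, Polynomial.eval_sub, Polynomial.eval_mul, Polynomial.eval_pow, Polynomial.eval_C,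
    Polynomial.eval_X] at hr
  exact sq_mul_sub_X_sq_mul_ne_X_pow_five r c (by linear_combination hr)

end PowerSeries

open PowerSeries

/-- The standard factor `F₁ = y³ - x⁵ - 3x²y²` of the germ
`Z = {y⁶ - 6x²y⁵ + 9x⁴y⁴ - 2x⁵y³ + 6x⁷y² + x¹⁰ - 9x¹¹ = 0}` has a Puiseux
`y`-root with initial terms `x^{5/3} + x² + ⋯` (written via `x = t³` as a power
series `S = t⁵ + t⁶ + ⋯`), and `F₁` is irreducible in `ℂ[[x]][y]`. -/
theorem stmt_15 :
    (∃ S : PowerSeries ℂ,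
      (∀ i, i < 5 → PowerSeries.coeff (R := ℂ) i S = 0) ∧
      PowerSeries.coeff (R := ℂ) 5 S = 1 ∧ PowerSeries.coeff (R := ℂ) 6 S = 1 ∧
      S ^ 3 - PowerSeries.X ^ 15 - 3 * PowerSeries.X ^ 6 * S ^ 2 = 0) ∧
    Irreducible (Polynomial.X ^ 3 - Polynomial.C (PowerSeries.X ^ 5)
      - 3 * Polynomial.C (PowerSeries.X ^ 2) * Polynomial.X ^ 2 :
        Polynomial (PowerSeries ℂ)) := by
  have h3 : IsUnit (3 : ℂ) := isUnit_iff_ne_zero.mpr three_ne_zero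
  refine ⟨?_, by
    simpa only [map_ofNat] using irreducible_X_pow_three_sub_C_X_pow_five_sub (K := ℂ) 3⟩
  obtain ⟨a, ha, b, hb⟩ := exists_pow_three_sub_three_X_mul_sq_eq_one h3
  have ha0 : coeff 0 a = 1 := by simpa [sub_eq_zero] using congrArg constantCoeff hb
  refine ⟨X ^ 5 * a, X_pow_dvd_iff.mp (dvd_mul_right _ a), ?_, ?_, ?_⟩
  · simpa [ha0] using coeff_X_pow_mul a 5 0
  · have ha1 := coeff_one_eq_one_of_pow_three_sub_three_X_mul_sq_eq_one h3 ha ⟨b, hb⟩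
    simpa [ha1] using coeff_X_pow_mul a 5 1
  · linear_combination (X : ℂ⟦X⟧) ^ 15 * ha
end

section
/- Let (n; m₁, …, m_g) be a characteristic sequence with d₀ = n, d_i = gcd(d_{i−1}, m_i), d_g = 1, and B_i = (m₁n + Σ_{j=2}^{i} d_{j−1}(m_j − m_{j−1}))/d_{i−1}. Then (m₁ + n)/(d₀·B₁) ≤ (m_i + n)/(d_{i−1}·B_i) for all 1 ≤ i ≤ g, where d₀·B₁ = n·m₁. -/
/-- The log canonical threshold of an irreducible plane curve with
characteristic sequence `(n; m₁, …, m_g)` is attained at the first terminal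
satellite point: `(m₁+n)/(n·m₁) ≤ (m_i+n)/(d_{i-1}·B_i)` for all `1 ≤ i ≤ g`,
where `d₀·B₁ = n·m₁`. -/
theorem stmt_19 (g n : ℕ) (m d B : ℕ → ℕ)
    (hg : 1 ≤ g) (hn : 0 < n) (hnm : n < m 1)
    (hmono : ∀ i, 1 ≤ i → i < g → m i < m (i + 1))
    (hd0 : d 0 = n)
    (hdi : ∀ i, 1 ≤ i → i ≤ g → d i = Nat.gcd (d (i - 1)) (m i))
    (hdg : d g = 1)
    (hdec : ∀ i, 1 ≤ i → i ≤ g → d i < d (i - 1))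
    (hB : ∀ l, 1 ≤ l → l ≤ g →
      d (l - 1) * B l = m 1 * n + ∑ i ∈ Finset.Icc 2 l, d (i - 1) * (m i - m (i - 1))) :
    ∀ i, 1 ≤ i → i ≤ g →
      ((m 1 : ℚ) + n) / (n * m 1) ≤ ((m i : ℚ) + n) / (d (i - 1) * B i) := by
  -- d 1 is a proper divisor of n, hence 2 * d 1 ≤ n
  have hd1gcd := hdi 1 le_rfl hg
  simp only [Nat.sub_self] at hd1gcd
  have hd1dvd : d 1 ∣ n := by
    rw [hd1gcd, hd0]; exact Nat.gcd_dvd_left _ _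
  have hd1lt : d 1 < n := by
    have := hdec 1 le_rfl hg
    simpa [hd0] using this
  have h2d1 : 2 * d 1 ≤ n := by
    obtain ⟨k, hk⟩ := hd1dvd
    have hk2 : 2 ≤ k := by
      by_contra h
      interval_cases k <;> omega
    calc 2 * d 1 ≤ d 1 * k := by nlinarith
    _ = n := hk.symm
  -- d j ≤ d 1 for 1 ≤ j ≤ g
  have hdle : ∀ j, 1 ≤ j → j ≤ g → d j ≤ d 1 := by
    intro j hj
    induction j, hj using Nat.le_induction with
    | base => intro _; exact le_rfl
    | succ j hj ih =>
      intro hjg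
      have := hdec (j + 1) (by omega) hjg
      simp only [Nat.add_sub_cancel] at this
      exact le_trans (le_of_lt this) (ih (by omega))
  -- key: (m 1 + n) * d j ≤ m 1 * n for 1 ≤ j ≤ g
  have key : ∀ j, 1 ≤ j → j ≤ g → (m 1 + n) * d j ≤ m 1 * n := by
    intro j hj hjg
    have h1 := hdle j hj hjg
    nlinarith [h2d1, hnm]
  -- main inequality in ℕ
  have main : ∀ i, 1 ≤ i → i ≤ g →
      (m 1 + n) * (d (i - 1) * B i) ≤ (m i + n) * (m 1 * n) := by
    intro i hi
    induction i, hi using Nat.le_induction with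
    | base =>
      intro _
      have h1 := hB 1 le_rfl hg
      simp only [Nat.sub_self, show Finset.Icc 2 1 = ∅ from rfl, Finset.sum_empty,
        add_zero] at h1
      rw [h1]
    | succ i hi ih =>
      intro hig
      have hig' : i ≤ g := by omega
      have hilt : i < g := by omega
      have hBi := hB i hi hig'
      have hBsucc := hB (i + 1) (by omega) hig
      simp only [Nat.add_sub_cancel] at hBsucc
      rw [Finset.sum_Icc_succ_top (by omega : 2 ≤ i + 1),
        Nat.add_sub_cancel, ← add_assoc, ← hBi] at hBsucc
      have hmlt := hmono i hi hilt
      set Δ := m (i + 1) - m i with hΔ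
      have hm' : m (i + 1) = m i + Δ := by omega
      have hk := key i hi hig'
      calc (m 1 + n) * (d i * B (i + 1))
          = (m 1 + n) * (d (i - 1) * B i) + ((m 1 + n) * d i) * Δ := by
            rw [hBsucc]; ring
        _ ≤ (m i + n) * (m 1 * n) + (m 1 * n) * Δ :=
            add_le_add (ih hig') (Nat.mul_le_mul_right Δ hk)
        _ = (m (i + 1) + n) * (m 1 * n) := by rw [hm']; ring
  -- transfer to ℚ
  intro i hi hig
  have hpos1 : (0 : ℚ) < n * m 1 := by
    have : 0 < n * m 1 := Nat.mul_pos hn (by omega)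
    exact_mod_cast this
  have hpos2 : (0 : ℚ) < (d (i - 1) : ℚ) * B i := by
    have h1 := hB i hi hig
    have : 0 < d (i - 1) * B i := by
      rw [h1]
      have : 0 < m 1 * n := Nat.mul_pos (by omega) hn
      omega
    exact_mod_cast this
  rw [div_le_div_iff₀ hpos1 hpos2]
  have h := main i hi hig
  have h' : ((m 1 + n) * (d (i - 1) * B i) : ℚ) ≤ ((m i + n) * (m 1 * n) : ℚ) := by
    exact_mod_cast h
  nlinarith [h']
end
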